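/- arXiv:2104.00927 — 3 statements merged into one kernel-verified Lean document; each statement's English description precedes it below -/
import Mathlib

section
/- Let x be a feasible SDP solution for H = (V,E) and let S ⊆ V with |S| = k ≥ r. Set σ := Σ_{I ∈ C(S,r)} ‖x_I‖². Then there exists a vertex u ∈ S such that the number of (r−1)-element subsets I of S∖{u} with ⟨x_u, x_I⟩ ≥ 3/4 is at least C(k−1, r−1)·(1 − 4·(1 − σ/C(k,r))). Here C(T,i) denotes the set of i-element subsets of T and C(k,r), C(k−1,r−1) are binomial coefficients. -/
open Finset
open scoped RealInnerProductSpace Classical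
/-- Feasibility of a solution for the crude SDP for an `r`-uniform hypergraph `(V, E)`. -/
def SDPFeasible {V : Type} [DecidableEq V]
    {H : Type} [NormedAddCommGroup H] [InnerProductSpace ℝ H]
    (r : ℕ) (E : Finset (Finset V)) (x : Finset V → H) : Prop :=
  (∀ i : V, ‖x {i}‖ ^ 2 = (1 : ℝ)) ∧
  (∀ e ∈ E, ‖x e‖ ^ 2 = (0 : ℝ)) ∧
  (∀ I J : Finset V, I.Nonempty → J.Nonempty → (I ∪ J).card ≤ r + 1 →
    ⟪x I, x J⟫ = ‖x (I ∪ J)‖ ^ 2) ∧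
  (∀ (u : V) (I J : Finset V), I.Nonempty → I ⊆ J → J.card ≤ r + 1 →
    ⟪x {u}, x J⟫ ≤ ⟪x {u}, x I⟫) ∧
  (∀ (u : V) (v : Fin r → V), Function.Injective v → (∀ i, v i ≠ u) →
    1 - ‖x (insert u (Finset.image v Finset.univ))‖ ^ 2 ≤
      ∑ i : Fin r, (1 - ‖x {u, v i}‖ ^ 2))

/-!
Call an `r`-set `J ⊆ S` heavy if `‖x J‖² ≥ 3/4`. Since every `‖x J‖² ≤ 1`, Markov's inequality
bounds the number of heavy sets from below by `C(k, r) · (1 - 4 (1 - σ / C(k, r)))`. Double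
counting pairs `(u, J)` with `u ∈ J` heavy gives a vertex `u` lying in at least an `r / k`
fraction of them, and `r / k · C(k, r) = C(k - 1, r - 1)`. Finally `⟪x_u, x_I⟫ = ‖x_{I ∪ {u}}‖²`,
so the heavy sets through `u` are exactly the sets `I ∪ {u}` counted in the theorem.
-/

section Counting

lemma sum_le_mul_card_add_card_filter_le {ι : Type*} (s : Finset ι) (f : ι → ℝ) (t : ℝ)
    (hf : ∀ i ∈ s, f i ≤ 1) :
    ∑ i ∈ s, f i ≤ t * #s + (1 - t) * #{i ∈ s | t ≤ f i} := by
  rw [← sum_filter_add_sum_filter_not s (fun i ↦ t ≤ f i)]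
  have hheavy : ∑ i ∈ s with t ≤ f i, f i ≤ #{i ∈ s | t ≤ f i} := by
    simpa using sum_le_card_nsmul _ _ 1 fun i hi ↦ hf i (mem_filter.1 hi).1
  have hlight : ∑ i ∈ s with ¬t ≤ f i, f i ≤ #{i ∈ s | ¬t ≤ f i} * t := by
    simpa using sum_le_card_nsmul _ _ t fun i hi ↦ (not_le.1 (mem_filter.1 hi).2).le
  have hcard : (#{i ∈ s | t ≤ f i} : ℝ) + #{i ∈ s | ¬t ≤ f i} = #s := by
    exact_mod_cast card_filter_add_card_filter_not _
  rw [← hcard]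
  linarith

variable {α : Type*} [DecidableEq α]

lemma card_filter_insert_powersetCard_erase {S : Finset α} {u : α} (hu : u ∈ S) (n : ℕ)
    (p : Finset α → Prop) [DecidablePred p] :
    #{I ∈ (S.erase u).powersetCard n | p (insert u I)} =
      #{J ∈ S.powersetCard (n + 1) | u ∈ J ∧ p J} := by
  refine card_nbij' (insert u) (·.erase u) (fun I hI ↦ ?_) (fun J hJ ↦ ?_) (fun I hI ↦ ?_)
    (fun J hJ ↦ ?_)
  · simp only [coe_filter, mem_powersetCard, Set.mem_ofPred_eq, subset_erase] at hI ⊢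
    refine ⟨⟨insert_subset hu hI.1.1.1, ?_⟩, mem_insert_self u I, hI.2⟩
    rw [card_insert_of_notMem hI.1.1.2, hI.1.2]
  · simp only [coe_filter, mem_powersetCard, Set.mem_ofPred_eq] at hJ ⊢
    refine ⟨⟨erase_subset_erase u hJ.1.1, by rw [card_erase_of_mem hJ.2.1, hJ.1.2]; rfl⟩, ?_⟩
    rw [insert_erase hJ.2.1]
    exact hJ.2.2
  · simp only [coe_filter, mem_powersetCard, Set.mem_ofPred_eq, subset_erase] at hI
    exact erase_insert hI.1.1.2
  · simp only [coe_filter, Set.mem_ofPred_eq] at hJ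
    exact insert_erase hJ.2.1

lemma sum_card_filter_mem_eq_card_mul {S : Finset α} {T : Finset (Finset α)} {r : ℕ}
    (hT : T ⊆ S.powersetCard r) : ∑ u ∈ S, #{J ∈ T | u ∈ J} = #T * r := by
  calc ∑ u ∈ S, #{J ∈ T | u ∈ J} = ∑ J ∈ T, #{u ∈ S | u ∈ J} :=
        sum_card_bipartiteAbove_eq_sum_card_bipartiteBelow (· ∈ ·)
    _ = #T * r := sum_const_nat fun J hJ ↦ by
        obtain ⟨hJS, hJr⟩ := mem_powersetCard.1 (hT hJ)
        rw [filter_mem_eq_inter, inter_eq_right.2 hJS, hJr]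

theorem exists_mem_le_card_filter_mem_of_le_one (S : Finset α) {r : ℕ} (hr : 1 ≤ r)
    (hrS : r ≤ #S) (f : Finset α → ℝ) {t : ℝ} (ht : t < 1)
    (hf : ∀ J ∈ S.powersetCard r, f J ≤ 1) :
    ∃ u ∈ S, ((#S - 1).choose (r - 1) : ℝ) *
        (1 - (1 - (∑ J ∈ S.powersetCard r, f J) / (#S).choose r) / (1 - t)) ≤
      #{J ∈ S.powersetCard r | u ∈ J ∧ t ≤ f J} := by
  set m := (#S).choose r
  set σ := ∑ J ∈ S.powersetCard r, f J
  set T := {J ∈ S.powersetCard r | t ≤ f J}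
  have hm : (0 : ℝ) < m := by exact_mod_cast Nat.choose_pos hrS
  have hmarkov : σ ≤ t * m + (1 - t) * #T := by
    simpa [card_powersetCard] using sum_le_mul_card_add_card_filter_le _ f t hf
  set c := 1 - (1 - σ / m) / (1 - t)
  have hheavy : (m : ℝ) * c ≤ #T := by
    rw [mul_sub, mul_one, mul_div_assoc', mul_sub, mul_one, mul_div_cancel₀ _ hm.ne',
      sub_le_comm, le_div_iff₀ (by linarith)]
    linarith
  have hchoose : #S * (#S - 1).choose (r - 1) = m * r := by
    have := Nat.add_one_mul_choose_eq (#S - 1) (r - 1)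
    rwa [Nat.sub_add_cancel (by omega), Nat.sub_add_cancel hr] at this
  have hcount (u : α) : #{J ∈ S.powersetCard r | u ∈ J ∧ t ≤ f J} = #{J ∈ T | u ∈ J} := by
    rw [filter_filter]
    simp_rw [and_comm]
  apply exists_le_of_sum_le (card_pos.1 (by omega))
  calc ∑ _u ∈ S, ((#S - 1).choose (r - 1) : ℝ) * c
      = r * (m * c) := by
        rw [sum_const, nsmul_eq_mul, ← mul_assoc, ← Nat.cast_mul, hchoose, Nat.cast_mul]
        ring
    _ ≤ r * #T := by gcongr
    _ = ∑ u ∈ S, (#{J ∈ T | u ∈ J} : ℝ) := by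
        rw [← Nat.cast_sum, sum_card_filter_mem_eq_card_mul (filter_subset _ _), Nat.cast_mul,
          mul_comm]
    _ = _ := by simp_rw [hcount]

end Counting

namespace SDPFeasible

variable {V H : Type} [DecidableEq V] [NormedAddCommGroup H] [InnerProductSpace ℝ H] {r : ℕ}
  {E : Finset (Finset V)} {x : Finset V → H}

lemma inner_singleton_eq_norm_sq_insert (hx : SDPFeasible r E x) {u : V} {I : Finset V}
    (hI : I.Nonempty) (hcard : #(insert u I) ≤ r + 1) :
    ⟪x {u}, x I⟫ = ‖x (insert u I)‖ ^ 2 := by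
  rw [insert_eq] at hcard ⊢
  exact hx.2.2.1 {u} I (singleton_nonempty u) hI hcard

lemma norm_sq_le_one (hx : SDPFeasible r E x) {J : Finset V} (hJ : J.Nonempty)
    (hcard : #J ≤ r + 1) : ‖x J‖ ^ 2 ≤ 1 := by
  obtain ⟨u, hu⟩ := hJ
  calc ‖x J‖ ^ 2 = ⟪x {u}, x J⟫ := by
        rw [hx.inner_singleton_eq_norm_sq_insert ⟨u, hu⟩ (by rwa [insert_eq_of_mem hu]),
          insert_eq_of_mem hu]
    _ ≤ ⟪x {u}, x {u}⟫ :=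
        hx.2.2.2.1 u {u} J (singleton_nonempty u) (singleton_subset_iff.2 hu) hcard
    _ = 1 := by rw [real_inner_self_eq_norm_sq, hx.1 u]

end SDPFeasible

theorem stmt_8_general {V : Type} [DecidableEq V]
    {H : Type} [NormedAddCommGroup H] [InnerProductSpace ℝ H]
    (r k : ℕ) (hr : 2 ≤ r)
    (E : Finset (Finset V))
    (x : Finset V → H) (hx : SDPFeasible r E x)
    (S : Finset V) (hScard : S.card = k) (hkr : r ≤ k) :
    ∃ u ∈ S,
      (((k - 1).choose (r - 1) : ℝ)) *
          (1 - 4 * (1 - (∑ I ∈ S.powersetCard r, ‖x I‖ ^ 2) / (k.choose r : ℝ))) ≤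
        ((((S.erase u).powersetCard (r - 1)).filter
            (fun I => (3 : ℝ) / 4 ≤ ⟪x {u}, x I⟫)).card : ℝ) := by
  subst hScard
  have hnorm : ∀ J ∈ S.powersetCard r, ‖x J‖ ^ 2 ≤ 1 := fun J hJ ↦ by
    have hJr := (mem_powersetCard.1 hJ).2
    exact hx.norm_sq_le_one (card_pos.1 (by omega)) (by omega)
  obtain ⟨u, hu, hle⟩ := exists_mem_le_card_filter_mem_of_le_one S (by omega) hkr
    (fun J ↦ ‖x J‖ ^ 2) (t := 3 / 4) (by norm_num) hnorm
  refine ⟨u, hu, ?_⟩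
  obtain ⟨n, rfl⟩ : ∃ n, r = n + 1 := ⟨r - 1, by omega⟩
  have hcount : #{I ∈ (S.erase u).powersetCard n | 3 / 4 ≤ ⟪x {u}, x I⟫} =
      #{J ∈ S.powersetCard (n + 1) | u ∈ J ∧ 3 / 4 ≤ ‖x J‖ ^ 2} := by
    rw [← card_filter_insert_powersetCard_erase hu]
    refine congrArg card (filter_congr fun I hI ↦ ?_)
    have hIn := (mem_powersetCard.1 hI).2
    rw [hx.inner_singleton_eq_norm_sq_insert (card_pos.1 (by omega))
      ((card_insert_le _ _).trans (by omega))]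
  rw [show (1 : ℝ) - 3 / 4 = 4⁻¹ by norm_num, div_inv_eq_mul, mul_comm _ 4] at hle
  rw [Nat.add_sub_cancel] at hle ⊢
  rwa [hcount]

theorem stmt_8 {V : Type} [Fintype V] [DecidableEq V]
    {H : Type} [NormedAddCommGroup H] [InnerProductSpace ℝ H]
    (r k : ℕ) (hr : 2 ≤ r)
    (E : Finset (Finset V)) (hE : ∀ e ∈ E, e.card = r)
    (x : Finset V → H) (hx : SDPFeasible r E x)
    (S : Finset V) (hScard : S.card = k) (hkr : r ≤ k) :
    ∃ u ∈ S,
      (((k - 1).choose (r - 1) : ℝ)) *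
          (1 - 4 * (1 - (∑ I ∈ S.powersetCard r, ‖x I‖ ^ 2) / (k.choose r : ℝ))) ≤
        ((((S.erase u).powersetCard (r - 1)).filter
            (fun I => (3 : ℝ) / 4 ≤ ⟪x {u}, x I⟫)).card : ℝ) :=
  stmt_8_general r k hr E x hx S hScard hkr
end

section
/- Let A and B be disjoint finite nonempty sets, let p ∈ (0,1], and let ν_p be the product probability measure on {0,1}^{A×B} under which the coordinates are independent Bernoulli(p) random variables. For ω ∈ {0,1}^{A×B} and (a,b) ∈ A×B set X_{ab}(ω) := p − ω_{(a,b)}. Then for every δ ∈ (0,1], ν_p of the set of ω for which there exists a sign assignment y : A ∪ B → {−1, +1} with |Σ_{(a,b) ∈ A×B} y(a)·y(b)·X_{ab}(ω)| > δ·p·|A|·|B| is at most 2^{1+2(|A|+|B|)}·exp(−3·δ²·p·|A|·|B|/8). -/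
open Finset
open scoped RealInnerProductSpace Classical
/-- Product Bernoulli(p) probability of an event `A ⊆ {0,1}^α`. -/
noncomputable def bernoulliProb {α : Type} [Fintype α] [DecidableEq α]
    (p : ℝ) (A : Set (α → Bool)) : ℝ :=
  ∑ ω : α → Bool, Set.indicator A (fun ω => ∏ a : α, if ω a then p else 1 - p) ω

/-! For a fixed coefficient vector `s` with `|s e| ≤ 1`, Chernoff's method bounds
`P(∑ s e X e > δ p N)` by `exp (-3 δ² p N / 8)`: each centred Bernoulli variable has moment
generating function at most `exp (2/3 p μ²)` for `|μ| ≤ 3/4`, and one tilts by `θ = 3δ/4`.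
The sum `∑ y a * y b * X ab` only depends on the restriction of `y` to `A ∪ B`, so a union bound
over the at most `2 ^ (|A| + |B|)` sign patterns and over the two tails of the absolute value
gives the prefactor. -/

open Real

theorem Real.exp_sub_one_sub_le_of_abs_le {x : ℝ} (hx : |x| ≤ 3 / 4) :
    exp x - 1 - x ≤ 2 / 3 * x ^ 2 := by
  have h := exp_bound (hx.trans (by norm_num)) (n := 3) (by norm_num)
  -- third-order Taylor: the remainder is at most `2/9 |x|³ ≤ x² / 6`
  norm_num [Finset.sum_range_succ, Nat.factorial] at h
  have h3 : |x| ^ 3 ≤ 3 / 4 * x ^ 2 := by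
    rw [pow_succ, sq_abs, mul_comm]; gcongr
  linarith [(abs_le.1 h).2]

/-- The left side is `E exp (μ (p - ω))` for `ω ~ Bernoulli(p)`. -/
theorem bernoulli_mgf_le {p μ : ℝ} (hp0 : 0 ≤ p) (hμ : |μ| ≤ 3 / 4) :
    p * exp (μ * (p - 1)) + (1 - p) * exp (μ * p) ≤ exp (2 / 3 * p * μ ^ 2) := by
  have hquad := exp_sub_one_sub_le_of_abs_le (x := -μ) (by rwa [abs_neg])
  calc p * exp (μ * (p - 1)) + (1 - p) * exp (μ * p)
      = exp (μ * p) * (p * (exp (-μ) - 1) + 1) := by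
        rw [show μ * (p - 1) = μ * p + -μ by ring, exp_add]; ring
    _ ≤ exp (μ * p) * exp (p * (exp (-μ) - 1)) := by gcongr; exact add_one_le_exp _
    _ = exp (p * (exp (-μ) - 1 - -μ)) := by rw [← exp_add]; ring_nf
    _ ≤ exp (2 / 3 * p * μ ^ 2) := exp_le_exp.2 (by nlinarith)

section BernoulliProduct

variable {ι : Type} [Fintype ι] {p : ℝ}

noncomputable def bernoulliWeight (p : ℝ) (ω : ι → Bool) : ℝ :=
  ∏ i, if ω i then p else 1 - p

theorem bernoulliWeight_nonneg (hp0 : 0 ≤ p) (hp1 : p ≤ 1) (ω : ι → Bool) :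
    0 ≤ bernoulliWeight p ω :=
  prod_nonneg fun i _ => by split_ifs <;> linarith

theorem bernoulliProb_eq_sum [DecidableEq ι] (p : ℝ) (E : Set (ι → Bool)) :
    bernoulliProb p E = ∑ ω, E.indicator (bernoulliWeight p) ω :=
  rfl

theorem bernoulliProb_mono [DecidableEq ι] (hp0 : 0 ≤ p) (hp1 : p ≤ 1) {E F : Set (ι → Bool)}
    (h : E ⊆ F) :
    bernoulliProb p E ≤ bernoulliProb p F :=
  sum_le_sum fun ω _ =>
    Set.indicator_le_indicator_of_subset h (bernoulliWeight_nonneg hp0 hp1) ω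

theorem bernoulliProb_union_le [DecidableEq ι] (hp0 : 0 ≤ p) (hp1 : p ≤ 1)
    (E F : Set (ι → Bool)) :
    bernoulliProb p (E ∪ F) ≤ bernoulliProb p E + bernoulliProb p F := by
  simp only [bernoulliProb_eq_sum, ← sum_add_distrib]
  refine sum_le_sum fun ω _ => ?_
  rw [← Set.indicator_union_add_inter_apply]
  exact le_add_of_nonneg_right
    (Set.indicator_nonneg (fun ω _ => bernoulliWeight_nonneg hp0 hp1 ω) ω)

theorem bernoulliProb_biUnion_le [DecidableEq ι] (hp0 : 0 ≤ p) (hp1 : p ≤ 1) {κ : Type*}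
    (T : Finset κ) (E : κ → Set (ι → Bool)) :
    bernoulliProb p (⋃ k ∈ T, E k) ≤ ∑ k ∈ T, bernoulliProb p (E k) := by
  simp only [bernoulliProb_eq_sum]
  rw [sum_comm]
  refine sum_le_sum fun ω _ => ?_
  have hnonneg : ∀ k ∈ T, 0 ≤ (E k).indicator (bernoulliWeight p) ω := fun k _ =>
    Set.indicator_nonneg (fun ω _ => bernoulliWeight_nonneg hp0 hp1 ω) ω
  by_cases hω : ω ∈ ⋃ k ∈ T, E k
  · obtain ⟨k, hk, hωk⟩ := Set.mem_iUnion₂.1 hω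
    rw [Set.indicator_of_mem hω, ← Set.indicator_of_mem hωk (bernoulliWeight p)]
    exact single_le_sum hnonneg hk
  · rw [Set.indicator_of_notMem hω]
    exact sum_nonneg hnonneg

/-- Markov's inequality applied to `exp (θ * f)`. -/
theorem bernoulliProb_lt_le_exp_mul_sum [DecidableEq ι] (hp0 : 0 ≤ p) (hp1 : p ≤ 1) {θ : ℝ}
    (hθ : 0 ≤ θ) (f : (ι → Bool) → ℝ) (t : ℝ) :
    bernoulliProb p {ω | t < f ω} ≤
      exp (-(θ * t)) * ∑ ω, bernoulliWeight p ω * exp (θ * f ω) := by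
  rw [bernoulliProb_eq_sum, mul_sum]
  refine sum_le_sum fun ω _ => ?_
  have hw := bernoulliWeight_nonneg hp0 hp1 ω
  by_cases hω : t < f ω
  · rw [Set.indicator_of_mem (s := {ω | t < f ω}) hω]
    have : 1 ≤ exp (-(θ * t)) * exp (θ * f ω) := by
      rw [← exp_add]; exact one_le_exp (by nlinarith)
    nlinarith
  · rw [Set.indicator_of_notMem (s := {ω | t < f ω}) hω]
    positivity

theorem sum_bernoulliWeight_mul_exp_le [DecidableEq ι] (hp0 : 0 ≤ p) (hp1 : p ≤ 1) (μ : ι → ℝ)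
    (hμ : ∀ i, |μ i| ≤ 3 / 4) :
    ∑ ω, bernoulliWeight p ω * exp (∑ i, μ i * (p - if ω i then 1 else 0)) ≤
      exp (2 / 3 * p * ∑ i, μ i ^ 2) := by
  calc ∑ ω, bernoulliWeight p ω * exp (∑ i, μ i * (p - if ω i then 1 else 0))
      = ∑ ω : ι → Bool, ∏ i,
          (if ω i then p else 1 - p) * exp (μ i * (p - if ω i then 1 else 0)) := by
        simp only [bernoulliWeight, exp_sum, ← prod_mul_distrib]
    _ = ∏ i, ∑ b : Bool, (if b then p else 1 - p) * exp (μ i * (p - if b then 1 else 0)) := by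
        rw [Fintype.prod_sum]
    _ = ∏ i, (p * exp (μ i * (p - 1)) + (1 - p) * exp (μ i * p)) := by
        simp only [Fintype.sum_bool]; norm_num
    _ ≤ ∏ i, exp (2 / 3 * p * μ i ^ 2) := by
        refine prod_le_prod (fun i _ => ?_) fun i _ => bernoulli_mgf_le hp0 (hμ i)
        have : 0 ≤ 1 - p := sub_nonneg.2 hp1
        positivity
    _ = exp (2 / 3 * p * ∑ i, μ i ^ 2) := by rw [← exp_sum, mul_sum]

end BernoulliProduct

section Chernoff

variable {ι : Type} [Fintype ι] [DecidableEq ι] {p δ : ℝ}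

theorem bernoulliProb_lt_sum_le (hp0 : 0 ≤ p) (hp1 : p ≤ 1) (hδ0 : 0 ≤ δ) (hδ1 : δ ≤ 1)
    (s : ι → ℝ) (hs : ∀ i, |s i| ≤ 1) :
    bernoulliProb p {ω | δ * p * Fintype.card ι < ∑ i, s i * (p - if ω i then 1 else 0)} ≤
      exp (-(3 * δ ^ 2 * p * Fintype.card ι / 8)) := by
  set θ := 3 * δ / 4 with hθdef
  set N : ℝ := (Fintype.card ι : ℝ)
  have hθ : 0 ≤ θ := by positivity
  have hμ : ∀ i, |θ * s i| ≤ 3 / 4 := fun i => by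
    rw [abs_mul, abs_of_nonneg hθ]
    exact (mul_le_of_le_one_right hθ (hs i)).trans (by linarith)
  have hsq : ∑ i, (θ * s i) ^ 2 ≤ N * θ ^ 2 := by
    calc ∑ i, (θ * s i) ^ 2 ≤ ∑ _i : ι, θ ^ 2 := sum_le_sum fun i _ => by
          rw [mul_pow, ← sq_abs (s i)]
          exact mul_le_of_le_one_right (sq_nonneg θ) (pow_le_one₀ (abs_nonneg _) (hs i))
      _ = N * θ ^ 2 := by rw [sum_const, card_univ, nsmul_eq_mul]
  calc _ ≤ exp (-(θ * (δ * p * N))) *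
        ∑ ω, bernoulliWeight p ω * exp (θ * ∑ i, s i * (p - if ω i then 1 else 0)) :=
        bernoulliProb_lt_le_exp_mul_sum hp0 hp1 hθ _ _
    _ = exp (-(θ * (δ * p * N))) *
        ∑ ω, bernoulliWeight p ω * exp (∑ i, θ * s i * (p - if ω i then 1 else 0)) := by
        simp only [mul_sum, mul_assoc]
    _ ≤ exp (-(θ * (δ * p * N))) * exp (2 / 3 * p * ∑ i, (θ * s i) ^ 2) := by
        gcongr; exact sum_bernoulliWeight_mul_exp_le hp0 hp1 _ hμ
    _ ≤ exp (-(θ * (δ * p * N))) * exp (2 / 3 * p * (N * θ ^ 2)) := by gcongr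
    _ = exp (-(3 * δ ^ 2 * p * N / 8)) := by rw [← exp_add, hθdef]; ring_nf

theorem bernoulliProb_lt_abs_sum_le (hp0 : 0 ≤ p) (hp1 : p ≤ 1) (hδ0 : 0 ≤ δ) (hδ1 : δ ≤ 1)
    (s : ι → ℝ) (hs : ∀ i, |s i| ≤ 1) :
    bernoulliProb p {ω | δ * p * Fintype.card ι < |∑ i, s i * (p - if ω i then 1 else 0)|} ≤
      2 * exp (-(3 * δ ^ 2 * p * Fintype.card ι / 8)) := by
  have hsplit :
      {ω : ι → Bool | δ * p * Fintype.card ι < |∑ i, s i * (p - if ω i then 1 else 0)|} ⊆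
        {ω | δ * p * Fintype.card ι < ∑ i, s i * (p - if ω i then 1 else 0)} ∪
          {ω | δ * p * Fintype.card ι < ∑ i, -s i * (p - if ω i then 1 else 0)} := by
    intro ω hω
    simp only [Set.mem_union, Set.mem_ofPred_eq, neg_mul, sum_neg_distrib] at hω ⊢
    exact lt_abs.1 hω
  have hneg : ∀ i, |-s i| ≤ 1 := fun i => by rw [abs_neg]; exact hs i
  calc _ ≤ _ := bernoulliProb_mono hp0 hp1 hsplit
    _ ≤ _ := bernoulliProb_union_le hp0 hp1 _ _
    _ ≤ _ := add_le_add (bernoulliProb_lt_sum_le hp0 hp1 hδ0 hδ1 s hs)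
        (bernoulliProb_lt_sum_le hp0 hp1 hδ0 hδ1 _ hneg)
    _ = _ := by ring

theorem bernoulliProb_exists_lt_abs_sum_le (hp0 : 0 ≤ p) (hp1 : p ≤ 1) (hδ0 : 0 ≤ δ)
    (hδ1 : δ ≤ 1) (T : Finset (ι → ℝ)) (hT : ∀ s ∈ T, ∀ i, |s i| ≤ 1) :
    bernoulliProb p {ω | ∃ s ∈ T,
        δ * p * Fintype.card ι < |∑ i, s i * (p - if ω i then 1 else 0)|} ≤
      #T * (2 * exp (-(3 * δ ^ 2 * p * Fintype.card ι / 8))) := by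
  have hcover : {ω : ι → Bool | ∃ s ∈ T,
        δ * p * Fintype.card ι < |∑ i, s i * (p - if ω i then 1 else 0)|} =
      ⋃ s ∈ T, {ω | δ * p * Fintype.card ι < |∑ i, s i * (p - if ω i then 1 else 0)|} := by
    ext ω; simp
  calc _ ≤ _ := hcover ▸ bernoulliProb_biUnion_le hp0 hp1 T _
    _ ≤ ∑ _s ∈ T, 2 * exp (-(3 * δ ^ 2 * p * Fintype.card ι / 8)) :=
        sum_le_sum fun s hs => bernoulliProb_lt_abs_sum_le hp0 hp1 hδ0 hδ1 s (hT s hs)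
    _ = _ := by rw [sum_const, nsmul_eq_mul]

end Chernoff

section SignPatterns

variable {α : Type} {S : Finset α}

noncomputable def signExtend (σ : S → Bool) (a : α) : ℝ :=
  if h : a ∈ S then (if σ ⟨a, h⟩ then 1 else -1) else 0

theorem abs_signExtend_le (σ : S → Bool) (a : α) : |signExtend σ a| ≤ 1 := by
  unfold signExtend; split_ifs <;> norm_num

theorem exists_signExtend_eq (y : α → ℝ) (hy : ∀ a ∈ S, y a = 1 ∨ y a = -1) :
    ∃ σ : S → Bool, ∀ a ∈ S, signExtend σ a = y a := by
  refine ⟨fun a => decide (y a = 1), fun a ha => ?_⟩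
  rcases hy a ha with h | h <;> norm_num [signExtend, ha, h]

end SignPatterns

section SignProducts

variable {α : Type} [DecidableEq α] (A B : Finset α)

noncomputable def signProducts : Finset ({e : α × α // e ∈ A ×ˢ B} → ℝ) :=
  univ.image fun (σ : (A ∪ B : Finset α) → Bool) e => signExtend σ e.1.1 * signExtend σ e.1.2

theorem abs_le_one_of_mem_signProducts {s : {e : α × α // e ∈ A ×ˢ B} → ℝ}
    (hs : s ∈ signProducts A B) (e : {e : α × α // e ∈ A ×ˢ B}) : |s e| ≤ 1 := by
  obtain ⟨σ, -, rfl⟩ := mem_image.1 hs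
  rw [abs_mul]
  exact mul_le_one₀ (abs_signExtend_le σ _) (abs_nonneg _) (abs_signExtend_le σ _)

theorem card_signProducts_le : #(signProducts A B) ≤ 2 ^ (#A + #B) :=
  calc #(signProducts A B) ≤ 2 ^ #(A ∪ B) := card_image_le.trans (by simp)
    _ ≤ 2 ^ (#A + #B) := Nat.pow_le_pow_right two_pos (card_union_le A B)

theorem exists_mem_signProducts_eq (y : α → ℝ) (hy : ∀ a ∈ A ∪ B, y a = 1 ∨ y a = -1) :
    ∃ s ∈ signProducts A B, ∀ e, s e = y e.1.1 * y e.1.2 := by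
  obtain ⟨σ, hσ⟩ := exists_signExtend_eq y hy
  refine ⟨_, mem_image_of_mem _ (mem_univ σ), fun e => ?_⟩
  obtain ⟨ha, hb⟩ := mem_product.1 e.2
  rw [hσ _ (mem_union_left B ha), hσ _ (mem_union_right A hb)]

end SignProducts

theorem stmt_12_general {α : Type} [DecidableEq α] (A B : Finset α)
    (p : ℝ) (hp0 : 0 < p) (hp1 : p ≤ 1) (δ : ℝ) (hδ0 : 0 < δ) (hδ1 : δ ≤ 1) :
    bernoulliProb p
      {ω : {e : α × α // e ∈ A ×ˢ B} → Bool |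
        ∃ y : α → ℝ, (∀ a ∈ A ∪ B, y a = 1 ∨ y a = -1) ∧
          δ * p * (A.card : ℝ) * (B.card : ℝ) <
            |∑ e : {e : α × α // e ∈ A ×ˢ B},
              y e.1.1 * y e.1.2 * (p - if ω e then 1 else 0)|} ≤
      2 ^ (1 + 2 * (A.card + B.card)) *
        Real.exp (-(3 * δ ^ 2 * p * (A.card : ℝ) * (B.card : ℝ) / 8)) := by
  set ι := {e : α × α // e ∈ A ×ˢ B}
  have hN : (Fintype.card ι : ℝ) = #A * #B := by simp [ι, card_product]
  have hcover : {ω : ι → Bool | ∃ y : α → ℝ, (∀ a ∈ A ∪ B, y a = 1 ∨ y a = -1) ∧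
        δ * p * #A * #B < |∑ e : ι, y e.1.1 * y e.1.2 * (p - if ω e then 1 else 0)|} ⊆
      {ω | ∃ s ∈ signProducts A B,
        δ * p * Fintype.card ι < |∑ e, s e * (p - if ω e then 1 else 0)|} := by
    rintro ω ⟨y, hy, hlt⟩
    obtain ⟨s, hs, hsy⟩ := exists_mem_signProducts_eq A B y hy
    exact ⟨s, hs, by simpa only [hsy, hN, mul_assoc] using hlt⟩
  have hcard : 2 * #(signProducts A B) ≤ 2 ^ (1 + 2 * (#A + #B)) :=
    calc 2 * #(signProducts A B) ≤ 2 ^ (1 + (#A + #B)) := by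
          rw [pow_add, pow_one]; gcongr; exact card_signProducts_le A B
      _ ≤ 2 ^ (1 + 2 * (#A + #B)) := Nat.pow_le_pow_right two_pos (by omega)
  calc _ ≤ _ := bernoulliProb_mono hp0.le hp1 hcover
    _ ≤ _ := bernoulliProb_exists_lt_abs_sum_le hp0.le hp1 hδ0.le hδ1 _
        fun s hs => abs_le_one_of_mem_signProducts A B hs
    _ = ((2 * #(signProducts A B) : ℕ) : ℝ) * exp (-(3 * δ ^ 2 * p * #A * #B / 8)) := by
        rw [hN]; push_cast; ring_nf
    _ ≤ _ := by gcongr; exact_mod_cast hcard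

theorem stmt_12 {α : Type} [DecidableEq α] (A B : Finset α)
    (hA : A.Nonempty) (hB : B.Nonempty) (hAB : Disjoint A B)
    (p : ℝ) (hp0 : 0 < p) (hp1 : p ≤ 1) (δ : ℝ) (hδ0 : 0 < δ) (hδ1 : δ ≤ 1) :
    bernoulliProb p
      {ω : {e : α × α // e ∈ A ×ˢ B} → Bool |
        ∃ y : α → ℝ, (∀ a ∈ A ∪ B, y a = 1 ∨ y a = -1) ∧
          δ * p * (A.card : ℝ) * (B.card : ℝ) <
            |∑ e : {e : α × α // e ∈ A ×ˢ B},
              y e.1.1 * y e.1.2 * (p - if ω e then 1 else 0)|} ≤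
      2 ^ (1 + 2 * (A.card + B.card)) *
        Real.exp (-(3 * δ ^ 2 * p * (A.card : ℝ) * (B.card : ℝ) / 8)) :=
  stmt_12_general A B p hp0 hp1 δ hδ0 hδ1
end

section
/- Let r, n, k be integers with r ≥ 2, 1 ≤ k ≤ n/2, and n ≥ 2(r−1). Then Σ_{i=1}^{r−1} C(k, i)·C(n−k, r−i) ≥ k·(n/(2r))^{r−1}, where C(m,i) denotes the binomial coefficient. -/
/-!
Only the term `i = 1` of the sum is needed. It equals `k * C(n - k, r - 1)`, and the classical
bound `C(m, j) ≥ (m / j) ^ j` gives `C(n - k, r - 1) ≥ ((n - k) / (r - 1)) ^ (r - 1)`, while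
`n - k ≥ n / 2` and `r - 1 < r` give `(n - k) / (r - 1) ≥ n / (2 * r)`.
-/

open Finset

theorem Nat.pow_le_pow_mul_choose {j m : ℕ} (h : j ≤ m) : m ^ j ≤ j ^ j * m.choose j := by
  induction j generalizing m with
  | zero => simp
  | succ j ih =>
    obtain ⟨m, rfl⟩ : ∃ m', m = m' + 1 := ⟨m - 1, by omega⟩
    -- after multiplying by `j ^ j`, the step is `(j + 1) * C(m + 1, j + 1) = (m + 1) * C(m, j)`
    -- together with `(m + 1) / (j + 1) ≤ m / j`
    refine Nat.le_of_mul_le_mul_right ?_ (Nat.pow_self_pos : 0 < j ^ j)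
    have hratio : (m + 1) * j ≤ (j + 1) * m := by rw [add_mul, add_mul, mul_comm j m]; omega
    calc (m + 1) ^ (j + 1) * j ^ j = (m + 1) * ((m + 1) * j) ^ j := by rw [mul_pow]; ring
      _ ≤ (m + 1) * ((j + 1) * m) ^ j := by gcongr
      _ = (m + 1) * (j + 1) ^ j * m ^ j := by rw [mul_pow]; ring
      _ ≤ (m + 1) * (j + 1) ^ j * (j ^ j * m.choose j) := by gcongr; exact ih (by omega)
      _ = (j + 1) ^ j * j ^ j * ((m + 1) * m.choose j) := by ring
      _ = (j + 1) ^ (j + 1) * (m + 1).choose (j + 1) * j ^ j := by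
        rw [Nat.add_one_mul_choose_eq]; ring

theorem Nat.div_pow_le_choose {α : Type*} [Field α] [LinearOrder α] [IsStrictOrderedRing α]
    {j m : ℕ} (h : j ≤ m) : ((m : α) / j) ^ j ≤ m.choose j := by
  rcases j.eq_zero_or_pos with rfl | hj
  · simp
  rw [div_pow, div_le_iff₀' (by positivity)]
  exact_mod_cast Nat.pow_le_pow_mul_choose h

lemma div_two_mul_le_sub_div {n k r : ℝ} (hk0 : 0 ≤ k) (hk : 2 * k ≤ n) (hr : 1 < r) :
    n / (2 * r) ≤ (n - k) / (r - 1) := by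
  have hnk : 0 ≤ n - k := by linarith
  calc n / (2 * r) = n / 2 / r := by rw [div_div]
    _ ≤ (n - k) / r := by gcongr; linarith
    _ ≤ (n - k) / (r - 1) := by gcongr; linarith

theorem stmt_19_general (r n k : ℕ) (hr : 2 ≤ r) (hk2 : 2 * k ≤ n)
    (hn : 2 * (r - 1) ≤ n) :
    (k : ℝ) * ((n : ℝ) / (2 * (r : ℝ))) ^ (r - 1) ≤
      ∑ i ∈ Finset.Icc 1 (r - 1), ((k.choose i : ℕ) : ℝ) * (((n - k).choose (r - i) : ℕ) : ℝ) := by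
  have hbase : (n : ℝ) / (2 * r) ≤ ((n - k : ℕ) : ℝ) / (r - 1 : ℕ) := by
    push_cast [show k ≤ n by omega, show 1 ≤ r by omega]
    exact div_two_mul_le_sub_div k.cast_nonneg (by exact_mod_cast hk2) (by exact_mod_cast hr)
  calc (k : ℝ) * ((n : ℝ) / (2 * r)) ^ (r - 1)
      ≤ k * (((n - k : ℕ) : ℝ) / (r - 1 : ℕ)) ^ (r - 1) := by gcongr
    _ ≤ k * (n - k).choose (r - 1) := by gcongr; exact Nat.div_pow_le_choose (by omega)
    _ = (k.choose 1 : ℕ) * ((n - k).choose (r - 1) : ℕ) := by rw [Nat.choose_one_right]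
    _ ≤ _ := single_le_sum (f := fun i => ((k.choose i : ℕ) : ℝ) * ((n - k).choose (r - i) : ℕ))
        (fun i _ => by positivity) (mem_Icc.2 ⟨le_rfl, by omega⟩)

theorem stmt_19 (r n k : ℕ) (hr : 2 ≤ r) (hk1 : 1 ≤ k) (hk2 : 2 * k ≤ n)
    (hn : 2 * (r - 1) ≤ n) :
    (k : ℝ) * ((n : ℝ) / (2 * (r : ℝ))) ^ (r - 1) ≤
      ∑ i ∈ Finset.Icc 1 (r - 1), ((k.choose i : ℕ) : ℝ) * (((n - k).choose (r - i) : ℕ) : ℝ) :=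
  stmt_19_general r n k hr hk2 hn
end
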